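/- For all t > 0, |s(t)| ≤ 1/2, where s(t) = t·g'(t)/g(t) and g(t) = (1/2)·(1 + 2t/sinh(2t)). -/

import Mathlib

/-!
Put `x = 2t`, `S = sinh x`, `C = cosh x`; then `s(t) = x (S - x C) / (S (S + x))`.
Since `tanh x ≤ x`, `s ≤ 0`. The bound `s ≥ -1/2` is `2 x² C ≤ S² + 3 x S`; squaring and using
`C² = 1 + S²` turns it into `S² ((S + 3x)² - 4x⁴) ≥ 4x⁴`, which is monotone in `S` as soon as
`S + 3x ≥ 2x²`. Both conditions therefore only need checking at the Taylor lower bound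
`S ≥ x + x³/6 + x⁵/120`, where they become polynomial inequalities in `x²`.
-/

/-- The shoaling factor `g(t) = (1/2)·(1 + 2t/sinh(2t))`. -/
noncomputable def gFun (t : ℝ) : ℝ := (1 / 2) * (1 + 2 * t / Real.sinh (2 * t))

open Real Finset
open scoped Nat

-- `x * sinhTaylorQuot (x ^ 2)` is the Taylor polynomial of degree 5 of `sinh x`.
noncomputable def sinhTaylorQuot (y : ℝ) : ℝ := 1 + y / 6 + y ^ 2 / 120

theorem one_le_sq_sinhTaylorQuot_add_three_sub {y : ℝ} (hy : 0 ≤ y) :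
    1 ≤ (sinhTaylorQuot y + 3) ^ 2 - 4 * y := by
  unfold sinhTaylorQuot
  nlinarith [sq_nonneg (y - 9), sq_nonneg (y ^ 2 / 120 + y / 6 - 3), mul_nonneg hy (sq_nonneg (y - 9))]

theorem four_le_sinhTaylorQuot_sq_mul {y : ℝ} (hy : 0 ≤ y) :
    4 ≤ sinhTaylorQuot y ^ 2 * ((sinhTaylorQuot y + 3) ^ 2 - 4 * y) := by
  have hgap := one_le_sq_sinhTaylorQuot_add_three_sub hy
  unfold sinhTaylorQuot at *
  rcases le_total y 5 with hy5 | hy5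
  · have : 4 ≤ (1 + y / 6 + y ^ 2 / 120 + 3) ^ 2 - 4 * y := by
      nlinarith [sq_nonneg (y - 9), sq_nonneg (y ^ 2 / 120 + y / 6 - 3)]
    nlinarith [one_le_pow₀ (n := 2) (by nlinarith : (1 : ℝ) ≤ 1 + y / 6 + y ^ 2 / 120)]
  · have : 4 ≤ (1 + y / 6 + y ^ 2 / 120) ^ 2 := by nlinarith
    nlinarith

namespace Real

theorem sum_le_sinh_of_nonneg {x : ℝ} (hx : 0 ≤ x) (n : ℕ) :
    ∑ i ∈ range n, x ^ (2 * i + 1) / (2 * i + 1)! ≤ sinh x :=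
  sum_le_hasSum _ (fun _ _ => by positivity) (hasSum_sinh x)

theorem mul_sinhTaylorQuot_le_sinh {x : ℝ} (hx : 0 ≤ x) : x * sinhTaylorQuot (x ^ 2) ≤ sinh x := by
  have h := sum_le_sinh_of_nonneg hx 3
  norm_num [sum_range_succ, Nat.factorial] at h
  unfold sinhTaylorQuot
  linarith

theorem sinh_le_mul_cosh {x : ℝ} (hx : 0 ≤ x) : sinh x ≤ x * cosh x := by
  refine hasSum_le (fun n => ?_) (hasSum_sinh x) ((hasSum_cosh x).mul_left x)
  rw [pow_succ', mul_div_assoc]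
  gcongr
  omega

theorem two_mul_sq_mul_cosh_le {x : ℝ} (hx : 0 ≤ x) :
    2 * x ^ 2 * cosh x ≤ sinh x ^ 2 + 3 * x * sinh x := by
  have hpS := mul_sinhTaylorQuot_le_sinh hx
  have hp : 0 ≤ sinhTaylorQuot (x ^ 2) := by unfold sinhTaylorQuot; positivity
  have hgap := one_le_sq_sinhTaylorQuot_add_three_sub (sq_nonneg x)
  have hpoly := four_le_sinhTaylorQuot_sq_mul (sq_nonneg x)
  generalize sinhTaylorQuot (x ^ 2) = p at hpS hp hgap hpoly
  set S := sinh x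
  have hxp : 0 ≤ x * p := by positivity
  have hS : 0 ≤ S := hxp.trans hpS
  have hgap' : 0 ≤ x ^ 2 * ((p + 3) ^ 2 - 4 * x ^ 2) := by positivity
  have hgapS : x ^ 2 * ((p + 3) ^ 2 - 4 * x ^ 2) ≤ (S + 3 * x) ^ 2 - 4 * x ^ 4 := by
    have : (x * (p + 3)) ^ 2 ≤ (S + 3 * x) ^ 2 := by gcongr; linarith
    linarith
  have hmono := mul_le_mul (pow_le_pow_left₀ hxp hpS 2) hgapS hgap' (sq_nonneg S)
  have hpoly' := mul_le_mul_of_nonneg_left hpoly (pow_nonneg hx 4)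
  rw [← pow_le_pow_iff_left₀ (by positivity) (by positivity) two_ne_zero]
  calc (2 * x ^ 2 * cosh x) ^ 2 = 4 * x ^ 4 + 4 * x ^ 4 * S ^ 2 := by rw [mul_pow, cosh_sq]; ring
    _ ≤ S ^ 2 * ((S + 3 * x) ^ 2 - 4 * x ^ 4) + 4 * x ^ 4 * S ^ 2 := by linarith
    _ = (S ^ 2 + 3 * x * S) ^ 2 := by ring

end Real

theorem hasDerivAt_gFun {t : ℝ} (ht : t ≠ 0) :
    HasDerivAt gFun ((sinh (2 * t) - 2 * t * cosh (2 * t)) / sinh (2 * t) ^ 2) t := by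
  have hS : sinh (2 * t) ≠ 0 := by simpa using ht
  have h2t : HasDerivAt (fun t : ℝ => 2 * t) 2 t := by simpa using (hasDerivAt_id t).const_mul 2
  exact (((h2t.div h2t.sinh hS).const_add 1).const_mul (1 / 2)).congr_deriv (by ring)

theorem mul_deriv_gFun_div_gFun {t : ℝ} (ht : 0 < t) :
    t * deriv gFun t / gFun t =
      2 * t * (sinh (2 * t) - 2 * t * cosh (2 * t)) / (sinh (2 * t) * (sinh (2 * t) + 2 * t)) := by
  have hS : 0 < sinh (2 * t) := sinh_pos_iff.2 (by positivity)
  have hS' : 0 < sinh (2 * t) + 2 * t := by positivity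
  rw [(hasDerivAt_gFun ht.ne').deriv, gFun]
  field_simp

/-- `|s(t)| ≤ 1/2` for all `t > 0`, where `s(t) = t·g'(t)/g(t)`. -/
theorem sFun_bound (t : ℝ) (ht : 0 < t) :
    |t * deriv gFun t / gFun t| ≤ 1 / 2 := by
  have hx : 0 < 2 * t := by positivity
  have hD : 0 < sinh (2 * t) * (sinh (2 * t) + 2 * t) := by
    have := sinh_pos_iff.2 hx
    positivity
  rw [mul_deriv_gFun_div_gFun ht, abs_le, le_div_iff₀ hD, div_le_iff₀ hD]
  constructor
  · linarith [two_mul_sq_mul_cosh_le hx.le]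
  · nlinarith [sinh_le_mul_cosh hx.le]
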